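/- Fix γ > 0, 0 < t ≤ T, and define φ(s,x) = (x+e)·exp(γ·√(2 s·log(x+e)) + (γ/2)·∫ₜˢ (γ + √(2/r)) dr) for (s,x) ∈ [t,T]×[0,∞). Then for all (s,x) ∈ [t,T]×[0,∞), the partial derivatives satisfy φ_x(s,x) > 0, φ_{xx}(s,x) > 0, φ_s(s,x) > 0, and moreover −(γ²/2)·φ_x(s,x)²/φ_{xx}(s,x) + φ_s(s,x) ≥ 0. -/

import Mathlib

/-- φ(s,x) = (x+e)·exp(γ·√(2 s·log(x+e)) + (γ/2)·∫ₜˢ (γ + √(2/r)) dr), where the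
integral equals γ(s−t) + 2√2(√s − √t). -/
noncomputable def phi (γ t s x : ℝ) : ℝ :=
  (x + Real.exp 1) *
    Real.exp (γ * Real.sqrt (2 * s * Real.log (x + Real.exp 1)) +
      γ / 2 * (γ * (s - t) + 2 * Real.sqrt 2 * (Real.sqrt s - Real.sqrt t)))

/-- The first-order partial derivative of φ in x. -/
noncomputable def phix (γ t s x : ℝ) : ℝ :=
  phi γ t s x * ((γ * Real.sqrt s + Real.sqrt (2 * Real.log (x + Real.exp 1))) /
    ((x + Real.exp 1) * Real.sqrt (2 * Real.log (x + Real.exp 1))))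

/-- The second-order partial derivative of φ in x. -/
noncomputable def phixx (γ t s x : ℝ) : ℝ :=
  phi γ t s x * (γ * Real.sqrt s *
      (2 * Real.log (x + Real.exp 1) + γ * Real.sqrt (2 * s * Real.log (x + Real.exp 1)) - 1) /
    ((x + Real.exp 1) ^ 2 * Real.sqrt (2 * Real.log (x + Real.exp 1)) ^ 3))

/-- The partial derivative of φ in s. -/
noncomputable def phis (γ t s x : ℝ) : ℝ :=
  γ * phi γ t s x / 2 *
    ((Real.sqrt (2 * Real.log (x + Real.exp 1)) + Real.sqrt 2) / Real.sqrt s + γ)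

/-! With `a = √(2 log (x + e)) ≥ √2` and `u = √s`, each partial derivative is `φ` times a rational
function of `a`, `u` and `γ`, and `γ²/2 · φ_x² / φ_xx ≤ φ_s` reduces to the polynomial inequality
`a (a + γu)² ≤ (a + √2 + γu)(a² + γua − 1)`, whose two sides differ by
`γu (√2 a − 1) + (a − √2)(√2 a + 1) ≥ 0`. -/

open Real

theorem one_le_log_add_exp {x : ℝ} (hx : 0 ≤ x) : 1 ≤ log (x + exp 1) := by
  rw [le_log_iff_exp_le (by positivity)]
  linarith

theorem phi_pos (γ t s : ℝ) {x : ℝ} (hx : 0 ≤ x) : 0 < phi γ t s x := by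
  unfold phi
  positivity

section

variable {a c : ℝ}

theorem sq_add_mul_sub_one_pos (hc : 0 ≤ c) (ha : √2 ≤ a) : 0 < a ^ 2 + c * a - 1 := by
  have ha2 : 2 ≤ a ^ 2 := by simpa using pow_le_pow_left₀ (sqrt_nonneg 2) ha 2
  nlinarith [mul_nonneg hc ((sqrt_nonneg 2).trans ha)]

theorem mul_add_sq_le_mul (hc : 0 ≤ c) (ha : √2 ≤ a) :
    a * (a + c) ^ 2 ≤ (a + √2 + c) * (a ^ 2 + c * a - 1) := by
  have h2 : √2 ^ 2 = 2 := sq_sqrt zero_le_two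
  have hs1 : 1 ≤ √2 := one_le_sqrt.mpr one_le_two
  have hdiff : (a + √2 + c) * (a ^ 2 + c * a - 1) - a * (a + c) ^ 2 =
      c * (√2 * a - 1) + (a - √2) * (√2 * a + 1) := by
    linear_combination a * h2
  linarith [mul_nonneg hc (by nlinarith : 0 ≤ √2 * a - 1),
    mul_nonneg (sub_nonneg.mpr ha) (by nlinarith : 0 ≤ √2 * a + 1)]

end

theorem phi_partials_pos_and_key_ineq_general (γ t T s x : ℝ) (hγ : 0 < γ) (ht : 0 < t)
    (hs : s ∈ Set.Icc t T) (hx : 0 ≤ x) :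
    0 < phix γ t s x ∧ 0 < phixx γ t s x ∧ 0 < phis γ t s x ∧
      0 ≤ -(γ ^ 2 / 2) * (phix γ t s x) ^ 2 / phixx γ t s x + phis γ t s x := by
  have hs0 : 0 < s := ht.trans_le hs.1
  have hP := phi_pos γ t s hx
  have hL := one_le_log_add_exp hx
  have hsplit : √(2 * s * log (x + exp 1)) = √(2 * log (x + exp 1)) * √s := by
    rw [mul_right_comm, sqrt_mul' _ hs0.le]
  unfold phix phixx phis
  rw [hsplit]
  set a := √(2 * log (x + exp 1))
  have ha : √2 ≤ a := sqrt_le_sqrt (by linarith)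
  have ha0 : 0 < a := (sqrt_pos.mpr two_pos).trans_le ha
  have hc : 0 ≤ γ * √s := by positivity
  rw [show 2 * log (x + exp 1) = a ^ 2 from (sq_sqrt (by linarith)).symm,
    show γ * (a * √s) = γ * √s * a by ring]
  have hq := sq_add_mul_sub_one_pos hc ha
  refine ⟨by positivity, by positivity, by positivity, ?_⟩
  rw [neg_mul, neg_div, le_neg_add_iff_le, div_le_iff₀ (by positivity)]
  field_simp
  linarith [mul_add_sq_le_mul hc ha]

/-- For `γ > 0`, `0 < t ≤ T`, and `(s,x) ∈ [t,T]×[0,∞)`: `φ_x > 0`, `φ_{xx} > 0`,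
`φ_s > 0` and `−(γ²/2)·φ_x²/φ_{xx} + φ_s ≥ 0`. -/
theorem phi_partials_pos_and_key_ineq (γ t T s x : ℝ) (hγ : 0 < γ) (ht : 0 < t)
    (htT : t ≤ T) (hs : s ∈ Set.Icc t T) (hx : 0 ≤ x) :
    0 < phix γ t s x ∧ 0 < phixx γ t s x ∧ 0 < phis γ t s x ∧
      0 ≤ -(γ ^ 2 / 2) * (phix γ t s x) ^ 2 / phixx γ t s x + phis γ t s x :=
  phi_partials_pos_and_key_ineq_general γ t T s x hγ ht hs hx
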